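/- arXiv:1106.4855 — 2 statements merged into one kernel-verified Lean document; each statement's English description precedes it below -/
import Mathlib

section
/- Let H be a separable infinite-dimensional complex Hilbert space. Every bounded operator T on H is the limit, in the strong-* topology, of a sequence of complex symmetric operators. Consequently, the closures of the set of complex symmetric operators in the strong-* topology, the strong operator topology, and the weak operator topology all equal B(H). -/
open Filter Topology ContinuousLinearMap

def IsConjugation {H : Type*} [NormedAddCommGroup H] [InnerProductSpace ℂ H]
    (C : H → H) : Prop :=
  (∀ x y, C (x + y) = C x + C y) ∧
  (∀ (a : ℂ) (x : H), C (a • x) = (starRingEnd ℂ a) • C x) ∧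
  (∀ x, ‖C x‖ = ‖x‖) ∧
  (∀ x, C (C x) = x)

/-- `T` is a complex symmetric operator: `T = C T* C` for some conjugation `C`. -/
def IsCSO {H : Type*} [NormedAddCommGroup H] [InnerProductSpace ℂ H]
    [CompleteSpace H] (T : H →L[ℂ] H) : Prop :=
  ∃ C : H → H, IsConjugation C ∧ ∀ x, T x = C (adjoint T (C x))

/-!
Fix a Hilbert basis `(eₖ)` and let `Pₙ` project onto `span {eₖ | k < n}`. For any conjugation
`C` and operator `D`, the operator `D + C D* C` is complex symmetric with respect to `C`. Take
`D = Pₙ T Pₙ`, which tends strongly to `T`, and let `Cₙ` be the coordinatewise conjugation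
composed with the permutation of the basis swapping the blocks `[0, n)` and `[n, 2n)`. As `Cₙ`
maps `ran Pₙ` into its orthogonal complement, `‖Pₙ Cₙ x‖ ≤ ‖x - Pₙ x‖ → 0`, so the correction
`Cₙ Pₙ T* Pₙ Cₙ` tends strongly to `0`. The adjoint of the whole operator has the same shape with
`T*` in place of `T`, which gives the strong-* convergence.
-/

open scoped InnerProductSpace ENNReal

theorem Orthonormal.countable {𝕜 E ι : Type*} [RCLike 𝕜] [NormedAddCommGroup E]
    [InnerProductSpace 𝕜 E] [TopologicalSpace.SeparableSpace E] {v : ι → E}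
    (hv : Orthonormal 𝕜 v) : Countable ι := by
  refine Pairwise.countable_of_isOpen_disjoint (s := fun i => Metric.ball (v i) (1 / 2))
    (fun i j hij => Metric.ball_disjoint_ball ?_) (fun _ => Metric.isOpen_ball)
    (fun i => Metric.nonempty_ball.2 one_half_pos)
  have hsq : dist (v i) (v j) ^ 2 = 2 := by
    rw [dist_eq_norm, @norm_sub_sq 𝕜, hv.1 i, hv.1 j, hv.inner_eq_zero hij, map_zero]
    norm_num
  nlinarith [dist_nonneg (x := v i) (y := v j)]

theorem Orthonormal.inner_eq_zero_of_mem_span_image {𝕜 E ι : Type*} [RCLike 𝕜]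
    [NormedAddCommGroup E] [InnerProductSpace 𝕜 E] {v : ι → E} (hv : Orthonormal 𝕜 v)
    {s : Set ι} {k : ι} (hk : k ∉ s) {u : E} (hu : u ∈ Submodule.span 𝕜 (v '' s)) :
    ⟪v k, u⟫_𝕜 = 0 := by
  refine Submodule.mem_orthogonal_singleton_iff_inner_right.1 (Submodule.span_le.2 ?_ hu)
  rintro _ ⟨i, hi, rfl⟩
  exact Submodule.mem_orthogonal_singleton_iff_inner_right.2
    (hv.inner_eq_zero fun h => hk (h ▸ hi))

theorem Submodule.mem_orthogonal_span {𝕜 E : Type*} [RCLike 𝕜] [NormedAddCommGroup E]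
    [InnerProductSpace 𝕜 E] {s : Set E} {v : E} (h : ∀ u ∈ s, ⟪u, v⟫_𝕜 = 0) :
    v ∈ (Submodule.span 𝕜 s)ᗮ := fun _ hu =>
  Submodule.mem_orthogonal_singleton_iff_inner_left.1 <| Submodule.span_le.2
    (fun w hw => Submodule.mem_orthogonal_singleton_iff_inner_left.2 (h w hw)) hu

theorem HilbertBasis.nonempty_nat {E : Type*} [NormedAddCommGroup E] [InnerProductSpace ℂ E]
    [CompleteSpace E] [TopologicalSpace.SeparableSpace E] (hinf : ¬ FiniteDimensional ℂ E) :
    Nonempty (HilbertBasis ℕ ℂ E) := by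
  obtain ⟨w, b, -⟩ := exists_hilbertBasis ℂ E
  have : Countable w := b.orthonormal.countable
  have : Infinite w := not_finite_iff_infinite.1 fun _ => by
    have := Fintype.ofFinite w
    exact hinf (b.toOrthonormalBasis.toBasis.finiteDimensional_of_finite)
  obtain ⟨e⟩ : Nonempty (ℕ ≃ w) := nonempty_equiv_of_countable
  refine ⟨HilbertBasis.mk (b.orthonormal.comp e e.injective) ?_⟩
  rw [e.surjective.range_comp, b.dense_span]

namespace IsConjugation

variable {H : Type*} [NormedAddCommGroup H] [InnerProductSpace ℂ H] {C : H → H}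

theorem map_add (hC : IsConjugation C) (x y : H) : C (x + y) = C x + C y := hC.1 x y

theorem map_smul (hC : IsConjugation C) (a : ℂ) (x : H) :
    C (a • x) = (starRingEnd ℂ a) • C x := hC.2.1 a x

theorem norm_map (hC : IsConjugation C) (x : H) : ‖C x‖ = ‖x‖ := hC.2.2.1 x

theorem map_map (hC : IsConjugation C) (x : H) : C (C x) = x := hC.2.2.2 x

theorem map_sub (hC : IsConjugation C) (x y : H) : C (x - y) = C x - C y :=
  (AddMonoidHom.mk' C hC.map_add).map_sub x y

-- Polarization: `C` is an isometry sending `I • z` to `-I • C z`.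
theorem inner_map_map (hC : IsConjugation C) (x y : H) : ⟪C x, C y⟫_ℂ = ⟪y, x⟫_ℂ := by
  have hI : ∀ z : H, Complex.I • C z = C (-Complex.I • z) := fun z => by
    rw [hC.map_smul, map_neg, Complex.conj_I, neg_neg]
  rw [inner_eq_sum_norm_sq_div_four (C x), inner_eq_sum_norm_sq_div_four y]
  simp only [RCLike.I_to_complex, hI, ← hC.map_add, ← hC.map_sub, hC.norm_map]
  have h₁ : y - Complex.I • x = -Complex.I • (x - -Complex.I • y) := by
    rw [smul_sub, smul_smul]
    simp only [neg_smul, mul_neg, neg_mul, Complex.I_mul_I, neg_neg, one_smul, sub_neg_eq_add]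
    abel
  have h₂ : y + Complex.I • x = Complex.I • (x + -Complex.I • y) := by
    rw [smul_add, smul_smul]
    simp only [mul_neg, Complex.I_mul_I, neg_neg, one_smul]
    abel
  rw [h₁, h₂, norm_smul, norm_smul, add_comm y, norm_sub_rev y]
  simp

noncomputable def conjOp (hC : IsConjugation C) (A : H →L[ℂ] H) : H →L[ℂ] H :=
  LinearMap.mkContinuous
    { toFun := fun x => C (A (C x))
      map_add' := fun x y => by simp only [hC.map_add, _root_.map_add]
      map_smul' := fun a x => by
        simp only [hC.map_smul, ContinuousLinearMap.map_smul, Complex.conj_conj, RingHom.id_apply] }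
    ‖A‖ fun x => by
      simpa only [LinearMap.coe_mk, AddHom.coe_mk, hC.norm_map] using A.le_opNorm (C x)

@[simp]
theorem conjOp_apply (hC : IsConjugation C) (A : H →L[ℂ] H) (x : H) :
    hC.conjOp A x = C (A (C x)) := rfl

theorem adjoint_conjOp [CompleteSpace H] (hC : IsConjugation C) (A : H →L[ℂ] H) :
    adjoint (hC.conjOp A) = hC.conjOp (adjoint A) := by
  refine ((ContinuousLinearMap.eq_adjoint_iff _ _).2 fun x y => ?_).symm
  calc ⟪C (adjoint A (C x)), y⟫_ℂ = ⟪C y, adjoint A (C x)⟫_ℂ := by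
        rw [← hC.inner_map_map, hC.map_map]
    _ = ⟪A (C y), C x⟫_ℂ := adjoint_inner_right A _ _
    _ = ⟪x, C (A (C y))⟫_ℂ := by rw [← hC.inner_map_map, hC.map_map]

theorem isCSO_add_conjOp_adjoint [CompleteSpace H] (hC : IsConjugation C) (D : H →L[ℂ] H) :
    IsCSO (D + hC.conjOp (adjoint D)) := by
  refine ⟨C, hC, fun x => ?_⟩
  rw [_root_.map_add, adjoint_conjOp, adjoint_adjoint]
  simp only [add_apply, conjOp_apply, hC.map_add, hC.map_map]
  exact add_comm _ _

end IsConjugation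

section Compression

variable {𝕜 E : Type*} [RCLike 𝕜] [NormedAddCommGroup E] [InnerProductSpace 𝕜 E]
  {ι : Type*} [Preorder ι] {U : ι → Submodule 𝕜 E} [∀ i, (U i).HasOrthogonalProjection]

theorem tendsto_starProjection_comp_starProjection_apply (hU : Monotone U)
    (hdense : ⊤ ≤ (⨆ i, U i).topologicalClosure) (T : E →L[𝕜] E) (x : E) :
    Tendsto (fun i => (U i).starProjection (T ((U i).starProjection x))) atTop (𝓝 (T x)) := by
  have hP : ∀ y, Tendsto (fun i => ‖(U i).starProjection y - y‖) atTop (𝓝 0) := fun y =>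
    tendsto_iff_norm_sub_tendsto_zero.1 (Submodule.starProjection_tendsto_self U hU y hdense)
  have hbound : ∀ i, ‖(U i).starProjection (T ((U i).starProjection x)) - T x‖ ≤
      ‖T‖ * ‖(U i).starProjection x - x‖ + ‖(U i).starProjection (T x) - T x‖ := fun i =>
    calc _ = ‖(U i).starProjection (T ((U i).starProjection x - x))
            + ((U i).starProjection (T x) - T x)‖ := by
          rw [map_sub, map_sub, sub_add_sub_cancel]
      _ ≤ ‖(U i).starProjection (T ((U i).starProjection x - x))‖
            + ‖(U i).starProjection (T x) - T x‖ := norm_add_le _ _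
      _ ≤ _ := add_le_add_left
            (((U i).norm_starProjection_apply_le _).trans (T.le_opNorm _)) _
  refine tendsto_iff_norm_sub_tendsto_zero.2 (squeeze_zero (fun _ => norm_nonneg _) hbound ?_)
  simpa using ((hP x).const_mul ‖T‖).add (hP (T x))

theorem adjoint_starProjection_comp_comp [CompleteSpace E] (K : Submodule 𝕜 E)
    [K.HasOrthogonalProjection] (T : E →L[𝕜] E) :
    adjoint (K.starProjection ∘L T ∘L K.starProjection)
      = K.starProjection ∘L adjoint T ∘L K.starProjection := by
  rw [adjoint_comp, adjoint_comp, (isSelfAdjoint_starProjection K).adjoint_eq, comp_assoc]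

end Compression

section Symmetrization

variable {H : Type*} [NormedAddCommGroup H] [InnerProductSpace ℂ H]

theorem norm_starProjection_conj_le {K : Submodule ℂ H} [K.HasOrthogonalProjection] {C : H → H}
    (hC : IsConjugation C) (hK : ∀ u ∈ K, C u ∈ Kᗮ) (x : H) :
    ‖K.starProjection (C x)‖ ≤ ‖x - K.starProjection x‖ := by
  have hPCP : K.starProjection (C (K.starProjection x)) = 0 :=
    K.starProjection_apply_eq_zero_iff.2 (hK _ (K.starProjection_apply_mem x))
  calc ‖K.starProjection (C x)‖ = ‖K.starProjection (C (x - K.starProjection x))‖ := by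
        rw [hC.map_sub, map_sub, hPCP, sub_zero]
    _ ≤ ‖C (x - K.starProjection x)‖ := K.norm_starProjection_apply_le _
    _ = ‖x - K.starProjection x‖ := hC.norm_map _

variable {ι : Type*} [Preorder ι] {U : ι → Submodule ℂ H} [∀ i, (U i).HasOrthogonalProjection]
  {C : ι → H → H}

theorem tendsto_conj_starProjection_comp_starProjection_conj (hU : Monotone U)
    (hdense : ⊤ ≤ (⨆ i, U i).topologicalClosure) (hC : ∀ i, IsConjugation (C i))
    (hCU : ∀ i, ∀ u ∈ U i, C i u ∈ (U i)ᗮ) (T : H →L[ℂ] H) (x : H) :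
    Tendsto (fun i => C i ((U i).starProjection (T ((U i).starProjection (C i x)))))
      atTop (𝓝 0) := by
  have hP : Tendsto (fun i => ‖x - (U i).starProjection x‖) atTop (𝓝 0) := by
    simpa only [norm_sub_rev] using
      tendsto_iff_norm_sub_tendsto_zero.1 (Submodule.starProjection_tendsto_self U hU x hdense)
  have hbound : ∀ i, ‖C i ((U i).starProjection (T ((U i).starProjection (C i x))))‖ ≤
      ‖T‖ * ‖x - (U i).starProjection x‖ := fun i =>
    calc _ = ‖(U i).starProjection (T ((U i).starProjection (C i x)))‖ := (hC i).norm_map _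
      _ ≤ ‖T ((U i).starProjection (C i x))‖ := (U i).norm_starProjection_apply_le _
      _ ≤ ‖T‖ * ‖(U i).starProjection (C i x)‖ := T.le_opNorm _
      _ ≤ _ := mul_le_mul_of_nonneg_left (norm_starProjection_conj_le (hC i) (hCU i) x)
            (norm_nonneg T)
  refine squeeze_zero_norm hbound ?_
  simpa using hP.const_mul ‖T‖

theorem exists_isCSO_tendsto_strongStar [CompleteSpace H] (hU : Monotone U)
    (hdense : ⊤ ≤ (⨆ i, U i).topologicalClosure) (hC : ∀ i, IsConjugation (C i))
    (hCU : ∀ i, ∀ u ∈ U i, C i u ∈ (U i)ᗮ) (T : H →L[ℂ] H) :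
    ∃ Tseq : ι → (H →L[ℂ] H), (∀ i, IsCSO (Tseq i)) ∧
      (∀ x : H, Tendsto (fun i => Tseq i x) atTop (𝓝 (T x))) ∧
      (∀ x : H, Tendsto (fun i => adjoint (Tseq i) x) atTop (𝓝 (adjoint T x))) := by
  set D : ι → (H →L[ℂ] H) → H →L[ℂ] H :=
    fun i A => (U i).starProjection ∘L A ∘L (U i).starProjection
  have hD : ∀ i A, adjoint (D i A) = D i (adjoint A) := fun i A =>
    adjoint_starProjection_comp_comp (U i) A
  have hlim : ∀ A x, Tendsto (fun i => D i A x + (hC i).conjOp (D i (adjoint A)) x)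
      atTop (𝓝 (A x)) := fun A x => by
    simpa [D] using (tendsto_starProjection_comp_starProjection_apply hU hdense A x).add
      (tendsto_conj_starProjection_comp_starProjection_conj hU hdense hC hCU (adjoint A) x)
  refine ⟨fun i => D i T + (hC i).conjOp (adjoint (D i T)),
    fun i => (hC i).isCSO_add_conjOp_adjoint _, fun x => ?_, fun x => ?_⟩
  · simpa only [hD, add_apply] using hlim T x
  · simpa only [_root_.map_add, IsConjugation.adjoint_conjOp, hD, adjoint_adjoint, add_apply]
      using hlim (adjoint T) x

end Symmetrization

namespace HilbertBasis

variable {H : Type*} [NormedAddCommGroup H] [InnerProductSpace ℂ H] {ι : Type*}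
  (b : HilbertBasis ι ℂ H)

theorem ext_inner {x y : H} (h : ∀ i, ⟪b i, x⟫_ℂ = ⟪b i, y⟫_ℂ) : x = y :=
  b.repr.injective <| lp.ext <| funext fun i => by simp only [b.repr_apply_apply, h]

noncomputable def conjAlong (σ : ι → ι) (hσ : Function.Involutive σ) (x : H) : H :=
  b.repr.symm ⟨fun i => star (b.repr x (σ i)), by
    refine memℓp_gen ?_
    simp only [norm_star]
    exact ((hσ.toPerm σ).summable_iff (f := fun i => ‖b.repr x i‖ ^ (2 : ℝ≥0∞).toReal)).2
      ((b.repr x).property.summable (by norm_num))⟩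

variable {σ : ι → ι} (hσ : Function.Involutive σ)

theorem inner_conjAlong (x : H) (i : ι) :
    ⟪b i, b.conjAlong σ hσ x⟫_ℂ = starRingEnd ℂ ⟪b (σ i), x⟫_ℂ := by
  rw [← b.repr_apply_apply, conjAlong, LinearIsometryEquiv.apply_symm_apply]
  exact congrArg star (b.repr_apply_apply x (σ i))

theorem norm_conjAlong (x : H) : ‖b.conjAlong σ hσ x‖ = ‖x‖ := by
  have h2 : 0 < (2 : ℝ≥0∞).toReal := by norm_num
  rw [conjAlong, LinearIsometryEquiv.norm_map, ← b.repr.norm_map x, lp.norm_eq_tsum_rpow h2,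
    lp.norm_eq_tsum_rpow h2]
  congr 1
  change ∑' i, ‖star (b.repr x (σ i))‖ ^ _ = _
  simpa only [norm_star, Function.Involutive.coe_toPerm] using
    (hσ.toPerm σ).tsum_eq (fun i => ‖b.repr x i‖ ^ (2 : ℝ≥0∞).toReal)

theorem isConjugation_conjAlong : IsConjugation (b.conjAlong σ hσ) := by
  refine ⟨fun x y => b.ext_inner fun i => ?_, fun a x => b.ext_inner fun i => ?_,
    b.norm_conjAlong hσ, fun x => b.ext_inner fun i => ?_⟩
  · simp only [inner_add_right, inner_conjAlong, map_add]
  · simp only [inner_smul_right, inner_conjAlong, map_mul]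
  · simp only [inner_conjAlong, hσ i, Complex.conj_conj]

theorem conjAlong_mem_orthogonal_span_image {s : Set ι} (hσs : ∀ k ∈ s, σ k ∉ s) {u : H}
    (hu : u ∈ Submodule.span ℂ (b '' s)) :
    b.conjAlong σ hσ u ∈ (Submodule.span ℂ (b '' s))ᗮ := by
  refine Submodule.mem_orthogonal_span ?_
  rintro _ ⟨k, hk, rfl⟩
  rw [inner_conjAlong, b.orthonormal.inner_eq_zero_of_mem_span_image (hσs k hk) hu, map_zero]

instance finiteDimensional_span_image_Iio [Preorder ι] [LocallyFiniteOrderBot ι] (n : ι) :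
    FiniteDimensional ℂ (Submodule.span ℂ (b '' Set.Iio n)) :=
  FiniteDimensional.span_of_finite ℂ ((Set.finite_Iio n).image b)

theorem monotone_span_image_Iio [Preorder ι] :
    Monotone fun n => Submodule.span ℂ (b '' Set.Iio n) := fun _ _ h =>
  Submodule.span_mono (Set.image_mono (Set.Iio_subset_Iio h))

theorem top_le_closure_iSup_span_image_Iio [Preorder ι] [NoMaxOrder ι] :
    ⊤ ≤ (⨆ n, Submodule.span ℂ (b '' Set.Iio n)).topologicalClosure := by
  rw [← Submodule.span_iUnion, ← Set.image_iUnion, Set.iUnion_Iio, Set.image_univ,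
    b.dense_span]

end HilbertBasis

def swapBlocks (n k : ℕ) : ℕ := if k < n then k + n else if k < 2 * n then k - n else k

theorem swapBlocks_involutive (n : ℕ) : Function.Involutive (swapBlocks n) := by
  intro k; unfold swapBlocks; split_ifs <;> omega

theorem le_swapBlocks {n k : ℕ} (hk : k < n) : n ≤ swapBlocks n k := by
  rw [swapBlocks, if_pos hk]; omega

/-- On a separable infinite-dimensional complex Hilbert space, every bounded
operator is the strong-* limit of a sequence of complex symmetric operators.
(Hence the strong-*, SOT and WOT closures of the complex symmetric operators
are all of `B(H)`.) -/
theorem CSO_strongStar_dense {H : Type*} [NormedAddCommGroup H]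
    [InnerProductSpace ℂ H] [CompleteSpace H]
    [TopologicalSpace.SeparableSpace H] (hinf : ¬ FiniteDimensional ℂ H)
    (T : H →L[ℂ] H) :
    ∃ Tseq : ℕ → (H →L[ℂ] H), (∀ n, IsCSO (Tseq n)) ∧
      (∀ x : H, Tendsto (fun n => Tseq n x) atTop (𝓝 (T x))) ∧
      (∀ x : H, Tendsto (fun n => adjoint (Tseq n) x) atTop (𝓝 (adjoint T x))) := by
  obtain ⟨b⟩ := HilbertBasis.nonempty_nat hinf
  exact exists_isCSO_tendsto_strongStar b.monotone_span_image_Iio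
    b.top_le_closure_iSup_span_image_Iio
    (fun n => b.isConjugation_conjAlong (swapBlocks_involutive n))
    (fun n _ => b.conjAlong_mem_orthogonal_span_image _ fun _ hk =>
      Set.notMem_Iio.2 (le_swapBlocks hk)) T
end

section
/- If T is a complex symmetric operator on a complex Hilbert space, then its spectrum equals its approximate point spectrum: σ(T) = σ_ap(T). -/
open ContinuousLinearMap

def approxSpec {H : Type*} [NormedAddCommGroup H] [InnerProductSpace ℂ H]
    (T : H →L[ℂ] H) : Set ℂ :=
  {lam | ∀ ε > (0:ℝ), ∃ x : H, ‖x‖ = 1 ∧ ‖T x - lam • x‖ < ε}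

/-!
If `λ ∉ σ_ap(T)`, then `λ - T` is bounded below, hence injective with closed range. If moreover
`λ ∈ σ(T)`, that range is a proper closed subspace, and its orthogonal complement
`ker (λ̄ - T*)` contains an eigenvector `y` of `T*`. Since `T = C T* C`, the vector `C y` is an
eigenvector of `T` for the eigenvalue `λ`, so `λ ∈ σ_ap(T)` after all.
-/

open Module.End

theorem ContinuousLinearMap.mul_norm_le_of_forall_norm_eq_one {𝕜 E F : Type*} [RCLike 𝕜]
    [NormedAddCommGroup E] [NormedSpace 𝕜 E] [NormedAddCommGroup F] [NormedSpace 𝕜 F]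
    {S : E →L[𝕜] F} {c : ℝ} (h : ∀ x, ‖x‖ = 1 → c ≤ ‖S x‖) (x : E) :
    c * ‖x‖ ≤ ‖S x‖ := by
  rcases eq_or_ne x 0 with rfl | hx
  · simp
  have hx' : ‖x‖ ≠ 0 := norm_ne_zero_iff.mpr hx
  have hunit := h ((‖x‖⁻¹ : 𝕜) • x) (by simp [norm_smul, hx'])
  rw [map_smul, norm_smul, norm_inv, RCLike.norm_ofReal, abs_norm] at hunit
  rwa [le_inv_mul_iff₀ (norm_pos_iff.mpr hx), mul_comm] at hunit

theorem ContinuousLinearMap.adjoint_algebraMap_sub {𝕜 E : Type*} [RCLike 𝕜]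
    [NormedAddCommGroup E] [InnerProductSpace 𝕜 E] [CompleteSpace E] (a : 𝕜) (T : E →L[𝕜] E) :
    adjoint (algebraMap 𝕜 (E →L[𝕜] E) a - T) =
      algebraMap 𝕜 (E →L[𝕜] E) (starRingEnd 𝕜 a) - adjoint T := by
  rw [← star_eq_adjoint, star_sub, ← algebraMap_star_comm, star_eq_adjoint]
  rfl

theorem ContinuousLinearMap.surjective_of_antilipschitz_of_ker_adjoint_eq_bot {𝕜 E F : Type*}
    [RCLike 𝕜] [NormedAddCommGroup E] [InnerProductSpace 𝕜 E] [CompleteSpace E]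
    [NormedAddCommGroup F] [InnerProductSpace 𝕜 F] [CompleteSpace F]
    {S : E →L[𝕜] F} {K : NNReal} (hS : AntilipschitzWith K S) (hker : (adjoint S).ker = ⊥) :
    Function.Surjective S := by
  have hclosed : IsClosed (S.range : Set F) := by
    rw [LinearMap.coe_range]
    exact hS.isClosed_range S.uniformContinuous
  rw [← coe_coe, ← LinearMap.range_eq_top, ← hclosed.submodule_topologicalClosure_eq,
    ← Submodule.orthogonal_orthogonal_eq_closure, orthogonal_range, hker,
    Submodule.bot_orthogonal_eq_top]

section

variable {H : Type*} [NormedAddCommGroup H] [InnerProductSpace ℂ H]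

theorem notMem_approxSpec_iff_exists_antilipschitz (T : H →L[ℂ] H) (lam : ℂ) :
    lam ∉ approxSpec T ↔ ∃ K, AntilipschitzWith K (algebraMap ℂ (H →L[ℂ] H) lam - T) := by
  have hS : ∀ x, (algebraMap ℂ (H →L[ℂ] H) lam - T) x = -(T x - lam • x) := by
    simp [Algebra.algebraMap_eq_smul_one]
  simp only [antilipschitzWith_iff_exists_mul_le_norm, hS, norm_neg, approxSpec, Set.mem_ofPred_eq,
    not_forall, not_exists, not_and, not_lt]
  constructor
  · rintro ⟨ε, hε, h⟩
    refine ⟨ε, hε, fun x => ?_⟩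
    have hbound := (algebraMap ℂ (H →L[ℂ] H) lam - T).mul_norm_le_of_forall_norm_eq_one
      (fun y hy => by rw [hS, norm_neg]; exact h y hy) x
    rwa [hS, norm_neg] at hbound
  · rintro ⟨c, hc, h⟩
    exact ⟨c, hc, fun x hx => by simpa [hx] using h x⟩

theorem approxSpec_subset_spectrum (T : H →L[ℂ] H) : approxSpec T ⊆ spectrum ℂ T := by
  rintro lam hlam ⟨u, hu⟩
  refine (notMem_approxSpec_iff_exists_antilipschitz T lam).2 ?_ hlam
  rw [← hu]
  exact ⟨_, (ContinuousLinearEquiv.unitsEquiv ℂ H u).antilipschitz⟩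

theorem mem_approxSpec_of_hasEigenvalue {T : H →L[ℂ] H} {lam : ℂ}
    (h : HasEigenvalue (T : Module.End ℂ H) lam) : lam ∈ approxSpec T := by
  obtain ⟨x, hx⟩ := h.exists_hasEigenvector
  intro ε hε
  refine ⟨(‖x‖⁻¹ : ℂ) • x, by simp [norm_smul, hx.2], ?_⟩
  rw [map_smul, ← coe_coe, hx.apply_eq_smul, smul_comm, sub_self, norm_zero]
  exact hε

theorem hasEigenvalue_adjoint_of_mem_spectrum_of_notMem_approxSpec [CompleteSpace H]
    {T : H →L[ℂ] H} {lam : ℂ} (hlam : lam ∈ spectrum ℂ T) (hap : lam ∉ approxSpec T) :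
    HasEigenvalue (adjoint T : Module.End ℂ H) (starRingEnd ℂ lam) := by
  obtain ⟨K, hK⟩ := (notMem_approxSpec_iff_exists_antilipschitz T lam).1 hap
  by_contra hnot
  rw [hasEigenvalue_iff, not_not] at hnot
  refine spectrum.mem_iff.1 hlam (isUnit_iff_bijective.2
    ⟨hK.injective, surjective_of_antilipschitz_of_ker_adjoint_eq_bot hK ?_⟩)
  rw [Submodule.eq_bot_iff]
  intro y hy
  rw [LinearMap.mem_ker, coe_coe, adjoint_algebraMap_sub, sub_apply, sub_eq_zero] at hy
  have hy_eig : y ∈ eigenspace (adjoint T : Module.End ℂ H) (starRingEnd ℂ lam) := by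
    rw [mem_eigenspace_iff, coe_coe, ← hy, ContinuousLinearMap.algebraMap_apply]
  rwa [hnot, Submodule.mem_bot] at hy_eig

theorem IsCSO.hasEigenvalue_of_hasEigenvalue_adjoint [CompleteSpace H] {T : H →L[ℂ] H}
    (hT : IsCSO T) {μ : ℂ} (h : HasEigenvalue (adjoint T : Module.End ℂ H) μ) :
    HasEigenvalue (T : Module.End ℂ H) (starRingEnd ℂ μ) := by
  obtain ⟨C, ⟨-, hCsmul, hCnorm, hCC⟩, hTC⟩ := hT
  obtain ⟨y, hy⟩ := h.exists_hasEigenvector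
  refine hasEigenvalue_of_hasEigenvector (x := C y) ⟨?_, ?_⟩
  · rw [mem_eigenspace_iff, coe_coe, hTC, hCC, ← coe_coe, hy.apply_eq_smul, hCsmul]
  · rw [← norm_ne_zero_iff, hCnorm, norm_ne_zero_iff]
    exact hy.2

end

theorem spectrum_eq_approxSpec_of_CSO_general {H : Type*} [NormedAddCommGroup H]
    [InnerProductSpace ℂ H] [CompleteSpace H]
    (T : H →L[ℂ] H) (hT : IsCSO T) :
    spectrum ℂ T = approxSpec T := by
  refine Set.Subset.antisymm (fun lam hlam => ?_) (approxSpec_subset_spectrum T)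
  by_contra hap
  have hT_eig := hT.hasEigenvalue_of_hasEigenvalue_adjoint
    (hasEigenvalue_adjoint_of_mem_spectrum_of_notMem_approxSpec hlam hap)
  rw [Complex.conj_conj] at hT_eig
  exact hap (mem_approxSpec_of_hasEigenvalue hT_eig)

/-- For a complex symmetric operator, the spectrum coincides with the
approximate point spectrum. -/
theorem spectrum_eq_approxSpec_of_CSO {H : Type*} [NormedAddCommGroup H]
    [InnerProductSpace ℂ H] [CompleteSpace H] [Nontrivial H]
    (T : H →L[ℂ] H) (hT : IsCSO T) :
    spectrum ℂ T = approxSpec T :=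
  spectrum_eq_approxSpec_of_CSO_general T hT
end
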